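/- Let k : (0,∞) → [0,∞) be nonincreasing and lower semicontinuous, and let σ be a locally finite positive Borel measure on ℝ^n satisfying a doubling condition. Then there exists C > 0 such that for every x ∈ ℝ^n and every r > 0, (1/C) k̄(2r)(x) ≤ k̄(r)(x) ≤ C k̄(2r)(x). -/

import Mathlib

open MeasureTheory ENNReal Set Metric
open scoped Classical ENNReal NNReal

noncomputable section

/-- We model `ℝ^n` as `EuclideanSpace ℝ (Fin n)`. -/
abbrev Euc (n : ℕ) := EuclideanSpace ℝ (Fin n)

/-- `k̄(r)(x) = (1/σ(B(x,r))) ∫_0^r k(s) σ(B(x,s)) ds/s`. -/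
def kbar (n : ℕ) (σ : Measure (Euc n)) (k : ℝ → ℝ) (r : ℝ) (x : Euc n) : ℝ≥0∞ :=
  (σ (ball x r))⁻¹ * ∫⁻ s in Ioo (0:ℝ) r, ENNReal.ofReal (k s / s) * σ (ball x s)

/-- `σ` is a doubling measure: `σ(B(x,2r)) ≤ C₀ σ(B(x,r))` for all `x`, `r > 0`. -/
def Doubling (n : ℕ) (σ : Measure (Euc n)) : Prop :=
  ∃ C₀ : ℝ, 0 < C₀ ∧ ∀ (x : Euc n) (r : ℝ), 0 < r →
    σ (ball x (2 * r)) ≤ ENNReal.ofReal C₀ * σ (ball x r)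

/-- The pair `(k,σ)` satisfies the logarithmic bounded oscillation (LBO) condition:
`sup_{y ∈ B(x,r)} k̄(r)(y) ≤ A inf_{y ∈ B(x,r)} k̄(r)(y)` uniformly in `x`, `r`. -/
def LBO (n : ℕ) (σ : Measure (Euc n)) (k : ℝ → ℝ) : Prop :=
  ∃ A : ℝ, 0 < A ∧ ∀ (x : Euc n) (r : ℝ), 0 < r →
    ∀ y ∈ ball x r, ∀ z ∈ ball x r, kbar n σ k r y ≤ ENNReal.ofReal A * kbar n σ k r z

/-! Write `I(t) = ∫_0^t k(s) σ(B(x,s)) ds/s`, so that `k̄(t)(x) = σ(B(x,t))⁻¹ I(t)`. Since `I` is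
monotone and doubling gives `σ(B(x,r))⁻¹ ≤ C₀ σ(B(x,2r))⁻¹`, we get `k̄(r) ≤ C₀ k̄(2r)`.
Conversely, as `k` is nonincreasing, the new part `∫_r^{2r}` of `I(2r)` is at most
`k(r) σ(B(x,2r)) ≤ C₀² k(r) σ(B(x,r/2))`, while the part `∫_{r/2}^r` of `I(r)` is at least
`k(r) σ(B(x,r/2)) / 2`. Hence `I(2r) ≤ (1 + 2C₀²) I(r)` and `k̄(2r) ≤ (1 + 2C₀²) k̄(r)`. -/

theorem ENNReal.inv_le_mul_inv_of_le_mul {a b D : ℝ≥0∞} (hD₀ : D ≠ 0) (hD : D ≠ ∞)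
    (h : b ≤ D * a) : a⁻¹ ≤ D * b⁻¹ := by
  rw [ENNReal.inv_le_iff_inv_le, ENNReal.mul_inv (.inl hD₀) (.inl hD), inv_inv,
    ENNReal.inv_mul_le_iff hD₀ hD]
  exact h

section

variable {X : Type*} [PseudoMetricSpace X] [MeasurableSpace X] (μ : Measure X) (k : ℝ → ℝ)
  (x : X)

def kbarNumerator (t : ℝ) : ℝ≥0∞ :=
  ∫⁻ s in Ioo (0:ℝ) t, ENNReal.ofReal (k s / s) * μ (ball x s)

theorem kbarNumerator_mono : Monotone (kbarNumerator μ k x) :=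
  fun _ _ hst => lintegral_mono_set (Ioo_subset_Ioo_right hst)

variable {μ k x}

theorem setLIntegral_Ico_two_mul_le (hmono : AntitoneOn k (Ioi 0)) {r : ℝ} (hr : 0 < r)
    (hkr : 0 ≤ k r) :
    ∫⁻ s in Ico r (2 * r), ENNReal.ofReal (k s / s) * μ (ball x s)
      ≤ ENNReal.ofReal (k r) * μ (ball x (2 * r)) := by
  have hbound : ∀ s ∈ Ico r (2 * r), ENNReal.ofReal (k s / s) * μ (ball x s)
      ≤ ENNReal.ofReal (k r / r) * μ (ball x (2 * r)) := fun s ⟨hrs, hs⟩ =>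
    mul_le_mul' (ENNReal.ofReal_le_ofReal
        (div_le_div₀ hkr (hmono hr (hr.trans_le hrs) hrs) hr hrs))
      (measure_mono (ball_subset_ball hs.le))
  calc ∫⁻ s in Ico r (2 * r), ENNReal.ofReal (k s / s) * μ (ball x s)
      ≤ ∫⁻ _ in Ico r (2 * r), ENNReal.ofReal (k r / r) * μ (ball x (2 * r)) :=
        setLIntegral_mono' measurableSet_Ico hbound
    _ = ENNReal.ofReal (k r / r) * ENNReal.ofReal r * μ (ball x (2 * r)) := by
        rw [setLIntegral_const, Real.volume_Ico, mul_right_comm]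
        ring_nf
    _ = ENNReal.ofReal (k r) * μ (ball x (2 * r)) := by
        rw [← ENNReal.ofReal_mul (div_nonneg hkr hr.le), div_mul_cancel₀ _ hr.ne']

theorem ofReal_half_mul_measure_ball_le_kbarNumerator (hk₀ : ∀ s ∈ Ioi (0:ℝ), 0 ≤ k s)
    (hmono : AntitoneOn k (Ioi 0)) {r : ℝ} (hr : 0 < r) :
    ENNReal.ofReal (k r / 2) * μ (ball x (r / 2)) ≤ kbarNumerator μ k x r := by
  have hbound : ∀ s ∈ Ioo (r / 2) r, ENNReal.ofReal (k r / r) * μ (ball x (r / 2))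
      ≤ ENNReal.ofReal (k s / s) * μ (ball x s) := fun s ⟨hs, hsr⟩ =>
    have hs₀ : 0 < s := (half_pos hr).trans hs
    mul_le_mul' (ENNReal.ofReal_le_ofReal
        (div_le_div₀ (hk₀ s hs₀) (hmono hs₀ hr hsr.le) hs₀ hsr.le))
      (measure_mono (ball_subset_ball hs.le))
  calc ENNReal.ofReal (k r / 2) * μ (ball x (r / 2))
      = ENNReal.ofReal (k r / r) * μ (ball x (r / 2)) * ENNReal.ofReal (r - r / 2) := by
        rw [mul_right_comm, ← ENNReal.ofReal_mul (div_nonneg (hk₀ r hr) hr.le)]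
        congr 2
        field_simp
        ring
    _ = ∫⁻ _ in Ioo (r / 2) r, ENNReal.ofReal (k r / r) * μ (ball x (r / 2)) := by
        rw [setLIntegral_const, Real.volume_Ioo]
    _ ≤ ∫⁻ s in Ioo (r / 2) r, ENNReal.ofReal (k s / s) * μ (ball x s) :=
        setLIntegral_mono' measurableSet_Ioo hbound
    _ ≤ kbarNumerator μ k x r :=
        lintegral_mono_set (Ioo_subset_Ioo_left (half_pos hr).le)

theorem kbarNumerator_two_mul_le (hk₀ : ∀ s ∈ Ioi (0:ℝ), 0 ≤ k s)
    (hmono : AntitoneOn k (Ioi 0)) {D : ℝ≥0∞}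
    (hD : ∀ t, 0 < t → μ (ball x (2 * t)) ≤ D * μ (ball x t)) {r : ℝ} (hr : 0 < r) :
    kbarNumerator μ k x (2 * r) ≤ (1 + 2 * D ^ 2) * kbarNumerator μ k x r := by
  have hkr : 0 ≤ k r := hk₀ r hr
  have hball : μ (ball x (2 * r)) ≤ D ^ 2 * μ (ball x (r / 2)) := by
    calc μ (ball x (2 * r)) ≤ D * μ (ball x r) := hD r hr
      _ ≤ D * (D * μ (ball x (r / 2))) := by
        gcongr
        simpa only [mul_div_cancel₀ r two_ne_zero] using hD (r / 2) (half_pos hr)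
      _ = D ^ 2 * μ (ball x (r / 2)) := by ring
  have htail : ∫⁻ s in Ico r (2 * r), ENNReal.ofReal (k s / s) * μ (ball x s)
      ≤ 2 * D ^ 2 * kbarNumerator μ k x r := by
    calc ∫⁻ s in Ico r (2 * r), ENNReal.ofReal (k s / s) * μ (ball x s)
        ≤ ENNReal.ofReal (k r) * μ (ball x (2 * r)) := setLIntegral_Ico_two_mul_le hmono hr hkr
      _ ≤ 2 * ENNReal.ofReal (k r / 2) * (D ^ 2 * μ (ball x (r / 2))) := by
        rw [← ENNReal.ofReal_ofNat 2, ← ENNReal.ofReal_mul zero_le_two,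
          mul_div_cancel₀ _ two_ne_zero]
        gcongr
      _ = 2 * D ^ 2 * (ENNReal.ofReal (k r / 2) * μ (ball x (r / 2))) := by ring
      _ ≤ 2 * D ^ 2 * kbarNumerator μ k x r := by
        gcongr
        exact ofReal_half_mul_measure_ball_le_kbarNumerator hk₀ hmono hr
  calc kbarNumerator μ k x (2 * r)
      ≤ ∫⁻ s in Ioo 0 r ∪ Ico r (2 * r), ENNReal.ofReal (k s / s) * μ (ball x s) := by
        refine lintegral_mono_set fun s ⟨hs₀, hs⟩ => ?_
        rcases lt_or_ge s r with hsr | hrs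
        exacts [.inl ⟨hs₀, hsr⟩, .inr ⟨hrs, hs⟩]
    _ ≤ kbarNumerator μ k x r
          + ∫⁻ s in Ico r (2 * r), ENNReal.ofReal (k s / s) * μ (ball x s) :=
        lintegral_union_le _ _ _
    _ ≤ kbarNumerator μ k x r + 2 * D ^ 2 * kbarNumerator μ k x r := by gcongr
    _ = (1 + 2 * D ^ 2) * kbarNumerator μ k x r := by ring

end

section

variable {n : ℕ} {σ : Measure (Euc n)} {k : ℝ → ℝ} {x : Euc n} {r : ℝ} {D : ℝ≥0∞}

theorem kbar_eq_inv_mul_kbarNumerator :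
    kbar n σ k r x = (σ (ball x r))⁻¹ * kbarNumerator σ k x r :=
  rfl

theorem kbar_le_mul_kbar_two_mul (hD₀ : D ≠ 0) (hD : D ≠ ∞)
    (hdbl : σ (ball x (2 * r)) ≤ D * σ (ball x r)) (hr : 0 ≤ r) :
    kbar n σ k r x ≤ D * kbar n σ k (2 * r) x := by
  simp only [kbar_eq_inv_mul_kbarNumerator, ← mul_assoc]
  gcongr
  · exact ENNReal.inv_le_mul_inv_of_le_mul hD₀ hD hdbl
  · exact kbarNumerator_mono σ k x (by linarith)

theorem kbar_two_mul_le_mul_kbar (hk₀ : ∀ s ∈ Ioi (0:ℝ), 0 ≤ k s)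
    (hmono : AntitoneOn k (Ioi 0))
    (hdbl : ∀ t, 0 < t → σ (ball x (2 * t)) ≤ D * σ (ball x t)) (hr : 0 < r) :
    kbar n σ k (2 * r) x ≤ (1 + 2 * D ^ 2) * kbar n σ k r x := by
  simp only [kbar_eq_inv_mul_kbarNumerator, mul_left_comm _ (σ (ball x r))⁻¹]
  gcongr
  · linarith
  · exact kbarNumerator_two_mul_le hk₀ hmono hdbl hr

end

theorem stmt11_general (n : ℕ) (k : ℝ → ℝ)
    (hk0 : ∀ r ∈ Ioi (0:ℝ), 0 ≤ k r) (hmono : AntitoneOn k (Ioi (0:ℝ)))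
    (σ : Measure (Euc n)) (hσ : Doubling n σ) :
    ∃ C : ℝ, 0 < C ∧ ∀ (x : Euc n) (r : ℝ), 0 < r →
      ENNReal.ofReal C⁻¹ * kbar n σ k (2 * r) x ≤ kbar n σ k r x ∧
      kbar n σ k r x ≤ ENNReal.ofReal C * kbar n σ k (2 * r) x := by
  obtain ⟨C₀, hC₀, hdbl⟩ := hσ
  set D := ENNReal.ofReal C₀
  have hD₀ : D ≠ 0 := ENNReal.ofReal_ne_zero_iff.mpr hC₀
  have hC : ENNReal.ofReal (C₀ + 1 + 2 * C₀ ^ 2) = D + (1 + 2 * D ^ 2) := by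
    rw [ENNReal.ofReal_add (by positivity) (by positivity), ENNReal.ofReal_add hC₀.le one_pos.le,
      ENNReal.ofReal_mul zero_le_two, ENNReal.ofReal_pow hC₀.le]
    simp [D, add_assoc]
  refine ⟨C₀ + 1 + 2 * C₀ ^ 2, by positivity, fun x r hr => ⟨?_, ?_⟩⟩
  · rw [ENNReal.ofReal_inv_of_pos (by positivity),
      ENNReal.inv_mul_le_iff (by positivity) ENNReal.ofReal_ne_top]
    calc kbar n σ k (2 * r) x ≤ (1 + 2 * D ^ 2) * kbar n σ k r x :=
          kbar_two_mul_le_mul_kbar hk0 hmono (hdbl x) hr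
      _ ≤ _ := by rw [hC]; gcongr ?_ * _; exact le_add_self
  · calc kbar n σ k r x ≤ D * kbar n σ k (2 * r) x :=
          kbar_le_mul_kbar_two_mul hD₀ ENNReal.ofReal_ne_top (hdbl x r hr) hr.le
      _ ≤ _ := by rw [hC]; gcongr ?_ * _; exact le_self_add

/-- If `k : (0,∞) → [0,∞)` is nonincreasing and lower semicontinuous and
`σ` is a locally finite positive Borel measure on `ℝ^n` satisfying a doubling condition,
then there is `C > 0` such that `(1/C) k̄(2r)(x) ≤ k̄(r)(x) ≤ C k̄(2r)(x)` for all `x`,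
`r > 0`. -/
theorem stmt11 (n : ℕ) (hn : 0 < n) (k : ℝ → ℝ)
    (hk0 : ∀ r ∈ Ioi (0:ℝ), 0 ≤ k r) (hmono : AntitoneOn k (Ioi (0:ℝ)))
    (hlsc : LowerSemicontinuousOn k (Ioi (0:ℝ)))
    (σ : Measure (Euc n)) [IsLocallyFiniteMeasure σ] (hσ : Doubling n σ) :
    ∃ C : ℝ, 0 < C ∧ ∀ (x : Euc n) (r : ℝ), 0 < r →
      ENNReal.ofReal C⁻¹ * kbar n σ k (2 * r) x ≤ kbar n σ k r x ∧
      kbar n σ k r x ≤ ENNReal.ofReal C * kbar n σ k (2 * r) x :=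
  stmt11_general n k hk0 hmono σ hσ
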